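/- arXiv:0904.1457 — 3 statements merged into one kernel-verified Lean document; each statement's English description precedes it below -/
import Mathlib

section
/- Let s', ω1, …, ω15 be real numbers. Define three vectors in ℝ⁷ depending on a real parameter t: a0(t) = (1+s'·t, −ω1·t, −ω2·t, −ω3·t, −ω4·t, −ω5·t, −ω6·t), a1(t) = (ω1·t, 1+s'·t, −ω7·t, −ω8·t, −ω9·t, −ω10·t, −ω11·t), a2(t) = (ω2·t, ω7·t, 1+s'·t, −ω12·t, −ω13·t, −ω14·t, −ω15·t). Then the following are equivalent: (i) for every t ∈ ℝ the vectors a0(t), a1(t), a2(t) are pairwise orthogonal (for the Euclidean inner product on ℝ⁷) and have equal Euclidean norms; (ii) the five conditions hold: Σ_{i=2}^{6} ωi·ω_{i+5} = 0, ω1·ω7 − Σ_{i=3}^{6} ωi·ω_{i+9} = 0, ω1·ω2 + Σ_{i=8}^{11} ωi·ω_{i+4} = 0, Σ_{i=2}^{6} ωi² = Σ_{i=7}^{11} ωi², and ω1² + Σ_{i=3}^{6} ωi² = ω7² + Σ_{i=12}^{15} ωi². -/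
/-! Write `aᵢ(t) = (1 + s' t) eᵢ + t vᵢ`. The `ω`-entries enter skew-symmetrically
(`⟪vᵢ, eⱼ⟫ = -⟪vⱼ, eᵢ⟫`), so the terms linear in `t` cancel and each of the five conditions
is `t ^ 2` times a condition saying that `v₀, v₁, v₂` are pairwise orthogonal of equal norms;
hence all `t` is equivalent to `t = 1`. -/

open Real
open scoped RealInnerProductSpace

/-- A vector in the Euclidean space `ℝ⁷` given by its seven coordinates. -/
noncomputable def vec7 (c0 c1 c2 c3 c4 c5 c6 : ℝ) : EuclideanSpace ℝ (Fin 7) :=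
  (WithLp.equiv 2 (Fin 7 → ℝ)).symm ![c0, c1, c2, c3, c4, c5, c6]

lemma inner_vec7 (a b c d e f g a' b' c' d' e' f' g' : ℝ) :
    ⟪vec7 a b c d e f g, vec7 a' b' c' d' e' f' g'⟫ =
      a * a' + b * b' + c * c' + d * d' + e * e' + f * f' + g * g' := by
  simp only [vec7, WithLp.equiv_symm_apply, PiLp.inner_apply, RCLike.inner_apply, ringHom_apply,
    Fin.sum_univ_seven, Fin.isValue, Matrix.cons_val_zero, Matrix.cons_val_one, Matrix.cons_val]
  ring

lemma norm_eq_norm_iff_real_inner_self_eq {E : Type*} [NormedAddCommGroup E]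
    [InnerProductSpace ℝ E] (x y : E) : ‖x‖ = ‖y‖ ↔ ⟪x, x⟫ = ⟪y, y⟫ := by
  rw [real_inner_self_eq_norm_sq, real_inner_self_eq_norm_sq,
    sq_eq_sq₀ (norm_nonneg x) (norm_nonneg y)]

/-- the vectors `a0 t`, `a1 t`, `a2 t` are pairwise orthogonal with
equal Euclidean norms for every `t` iff the five algebraic conditions on the `ωᵢ` hold. -/
theorem stmt0 (s' ω1 ω2 ω3 ω4 ω5 ω6 ω7 ω8 ω9 ω10 ω11 ω12 ω13 ω14 ω15 : ℝ) :
    (∀ t : ℝ,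
      let a0 : EuclideanSpace ℝ (Fin 7) :=
        vec7 (1 + s' * t) (-(ω1 * t)) (-(ω2 * t)) (-(ω3 * t)) (-(ω4 * t)) (-(ω5 * t)) (-(ω6 * t))
      let a1 : EuclideanSpace ℝ (Fin 7) :=
        vec7 (ω1 * t) (1 + s' * t) (-(ω7 * t)) (-(ω8 * t)) (-(ω9 * t)) (-(ω10 * t)) (-(ω11 * t))
      let a2 : EuclideanSpace ℝ (Fin 7) :=
        vec7 (ω2 * t) (ω7 * t) (1 + s' * t) (-(ω12 * t)) (-(ω13 * t)) (-(ω14 * t)) (-(ω15 * t))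
      ⟪a0, a1⟫ = 0 ∧ ⟪a0, a2⟫ = 0 ∧ ⟪a1, a2⟫ = 0 ∧ ‖a0‖ = ‖a1‖ ∧ ‖a0‖ = ‖a2‖)
    ↔
    (ω2 * ω7 + ω3 * ω8 + ω4 * ω9 + ω5 * ω10 + ω6 * ω11 = 0 ∧
     ω1 * ω7 - (ω3 * ω12 + ω4 * ω13 + ω5 * ω14 + ω6 * ω15) = 0 ∧
     ω1 * ω2 + (ω8 * ω12 + ω9 * ω13 + ω10 * ω14 + ω11 * ω15) = 0 ∧
     ω2 ^ 2 + ω3 ^ 2 + ω4 ^ 2 + ω5 ^ 2 + ω6 ^ 2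
       = ω7 ^ 2 + ω8 ^ 2 + ω9 ^ 2 + ω10 ^ 2 + ω11 ^ 2 ∧
     ω1 ^ 2 + ω3 ^ 2 + ω4 ^ 2 + ω5 ^ 2 + ω6 ^ 2
       = ω7 ^ 2 + ω12 ^ 2 + ω13 ^ 2 + ω14 ^ 2 + ω15 ^ 2) := by
  simp only [norm_eq_norm_iff_real_inner_self_eq, inner_vec7]
  constructor
  · intro h
    obtain ⟨h01, h02, h12, h11, h22⟩ := h 1
    exact ⟨by linear_combination h01, by linear_combination -h02, by linear_combination h12,
      by linear_combination h11, by linear_combination h22⟩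
  · rintro ⟨c01, c02, c12, c11, c22⟩ t
    exact ⟨by linear_combination t ^ 2 * c01, by linear_combination -t ^ 2 * c02,
      by linear_combination t ^ 2 * c12, by linear_combination t ^ 2 * c11,
      by linear_combination t ^ 2 * c22⟩
end

section
/- Let x, y, z be real numbers such that 16x⁶ − 120x⁴(y² + z²) + 90x²(y² + z²)² − 5(y² + z²)³ = 0, y⁶ − 15y⁴z² + 15y²z⁴ − z⁶ = 0, and y·z·(3y² − z²)·(y² − 3z²) = 0. Then x = y = z = 0. -/
/-!
The second and third equations are the real part and (up to the factor 2) the imaginary part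
of `(y + i z)⁶ = 0`, so taking absolute values gives `(y² + z²)⁶ = 0`, i.e. `y = z = 0`.
The first equation then reduces to `16 x⁶ = 0`.
-/

section

variable {R : Type*}

/-- `|(y + i z)⁶|² = |y + i z|¹²`, written in real coordinates. -/
theorem sq_add_sq_pow_six_eq [CommRing R] (y z : R) :
    (y ^ 2 + z ^ 2) ^ 6 = (y ^ 6 - 15 * y ^ 4 * z ^ 2 + 15 * y ^ 2 * z ^ 4 - z ^ 6) ^ 2
      + (2 * (y * z * (3 * y ^ 2 - z ^ 2) * (y ^ 2 - 3 * z ^ 2))) ^ 2 := by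
  ring

theorem eq_zero_and_eq_zero_of_sextic_eq_zero [CommRing R] [LinearOrder R] [IsStrictOrderedRing R]
    {y z : R} (hre : y ^ 6 - 15 * y ^ 4 * z ^ 2 + 15 * y ^ 2 * z ^ 4 - z ^ 6 = 0)
    (him : y * z * (3 * y ^ 2 - z ^ 2) * (y ^ 2 - 3 * z ^ 2) = 0) :
    y = 0 ∧ z = 0 := by
  have hpow : (y ^ 2 + z ^ 2) ^ 6 = 0 := by
    rw [sq_add_sq_pow_six_eq, hre, him]
    ring
  have hsum : y * y + z * z = 0 := by
    simpa only [sq] using pow_eq_zero_iff (n := 6) (by norm_num) |>.1 hpow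
  exact mul_self_add_mul_self_eq_zero.1 hsum

end

/-- the polynomial system coming from the coefficients of
`cos(12φ)`, `cos(6θ+12φ)` and `sin(6θ+12φ)` has only the trivial real solution. -/
theorem stmt2 (x y z : ℝ)
    (h1 : 16 * x ^ 6 - 120 * x ^ 4 * (y ^ 2 + z ^ 2)
      + 90 * x ^ 2 * (y ^ 2 + z ^ 2) ^ 2 - 5 * (y ^ 2 + z ^ 2) ^ 3 = 0)
    (h2 : y ^ 6 - 15 * y ^ 4 * z ^ 2 + 15 * y ^ 2 * z ^ 4 - z ^ 6 = 0)
    (h3 : y * z * (3 * y ^ 2 - z ^ 2) * (y ^ 2 - 3 * z ^ 2) = 0) :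
    x = 0 ∧ y = 0 ∧ z = 0 := by
  obtain ⟨rfl, rfl⟩ := eq_zero_and_eq_zero_of_sextic_eq_zero h2 h3
  have hx : x ^ 6 = 0 := by linear_combination (1 / 16 : ℝ) * h1
  exact ⟨pow_eq_zero_iff (by norm_num) |>.1 hx, rfl, rfl⟩
end

section
/- Let s', ω1, …, ω11 and b1', …, b7' be real numbers with b1' = b2' = b3' = 0 and Σ_{i=2}^{6} ωi² = Σ_{i=7}^{11} ωi². Set β = Σ_{i=1}^{7} (bi')² and δ = ¼ (2(s'² + ω1²) + Σ_{i=2}^{11} ωi²). Then β + s'² + 6δ − ω1² − ω2² − ω7² = Σ_{i=4}^{7} (bi')² + ω2² + Σ_{i=8}^{11} ωi² + 2(2s'² + ω1² + Σ_{i=3}^{6} ωi²); in particular this quantity is nonnegative, and it is strictly positive whenever s' ≠ 0. -/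
/-- the positivity identity for `β + s'² + 6δ − ω1² − ω2² − ω7²`. -/
theorem stmt5 (s' ω1 ω2 ω3 ω4 ω5 ω6 ω7 ω8 ω9 ω10 ω11
    b1' b2' b3' b4' b5' b6' b7' : ℝ)
    (hb1 : b1' = 0) (hb2 : b2' = 0) (hb3 : b3' = 0)
    (hc4 : ω2 ^ 2 + ω3 ^ 2 + ω4 ^ 2 + ω5 ^ 2 + ω6 ^ 2
      = ω7 ^ 2 + ω8 ^ 2 + ω9 ^ 2 + ω10 ^ 2 + ω11 ^ 2) :
    let β : ℝ := b1' ^ 2 + b2' ^ 2 + b3' ^ 2 + b4' ^ 2 + b5' ^ 2 + b6' ^ 2 + b7' ^ 2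
    let δ : ℝ := (1/4) * (2 * (s' ^ 2 + ω1 ^ 2)
      + (ω2 ^ 2 + ω3 ^ 2 + ω4 ^ 2 + ω5 ^ 2 + ω6 ^ 2 + ω7 ^ 2 + ω8 ^ 2 + ω9 ^ 2 + ω10 ^ 2
        + ω11 ^ 2))
    β + s' ^ 2 + 6 * δ - ω1 ^ 2 - ω2 ^ 2 - ω7 ^ 2
      = (b4' ^ 2 + b5' ^ 2 + b6' ^ 2 + b7' ^ 2) + ω2 ^ 2
        + (ω8 ^ 2 + ω9 ^ 2 + ω10 ^ 2 + ω11 ^ 2)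
        + 2 * (2 * s' ^ 2 + ω1 ^ 2 + (ω3 ^ 2 + ω4 ^ 2 + ω5 ^ 2 + ω6 ^ 2)) ∧
    0 ≤ β + s' ^ 2 + 6 * δ - ω1 ^ 2 - ω2 ^ 2 - ω7 ^ 2 ∧
    (s' ≠ 0 → 0 < β + s' ^ 2 + 6 * δ - ω1 ^ 2 - ω2 ^ 2 - ω7 ^ 2) := by
  intro β δ
  have sum_of_squares : β + s' ^ 2 + 6 * δ - ω1 ^ 2 - ω2 ^ 2 - ω7 ^ 2
      = (b4' ^ 2 + b5' ^ 2 + b6' ^ 2 + b7' ^ 2) + ω2 ^ 2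
        + (ω8 ^ 2 + ω9 ^ 2 + ω10 ^ 2 + ω11 ^ 2)
        + 2 * (2 * s' ^ 2 + ω1 ^ 2 + (ω3 ^ 2 + ω4 ^ 2 + ω5 ^ 2 + ω6 ^ 2)) := by
    simp only [β, δ, hb1, hb2, hb3]
    linear_combination (-1 / 2 : ℝ) * hc4
  refine ⟨sum_of_squares, ?_, fun hs => ?_⟩ <;> rw [sum_of_squares] <;> positivity
end
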